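/- arXiv:1001.1014 — 4 statements merged into one kernel-verified Lean document; each statement's English description precedes it below -/
import Mathlib

section
/- Let X̃ᵢ = aUXᵢ + b for i = 1,…,n, where U is a unitary operator on H, a ≠ 0 is a real scalar, and b ∈ H. Then the trimmed covariance operator of the transformed sample satisfies C̃ = a²U∘Ĉ∘U*, where Ĉ is the trimmed covariance operator of the original sample and U* is the adjoint of U. -/
open scoped BigOperators RealInnerProductSpace

/-- The `k`-th smallest value (order statistic) of `f : Fin n → ℝ`. -/
noncomputable def kthSmallest {n : ℕ} (f : Fin n → ℝ) (k : ℕ) : ℝ :=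
  sInf {t : ℝ | k ≤ (Finset.univ.filter fun j => f j ≤ t).card}

/-- The α-radius `rᵢ`: the `⌈αn⌉`-th smallest interdistance `‖Xᵢ − Xⱼ‖`, `j = 1,…,n`. -/
noncomputable def sampleRadius {H : Type*} [NormedAddCommGroup H] {n : ℕ}
    (α : ℝ) (X : Fin n → H) (i : Fin n) : ℝ :=
  kthSmallest (fun j => ‖X i - X j‖) ⌈α * n⌉₊

/-- `rank(rᵢ) = #{j : rⱼ < rᵢ} + #{j ≤ i : rⱼ = rᵢ}`. -/
noncomputable def sampleRank {n : ℕ} (r : Fin n → ℝ) (i : Fin n) : ℕ :=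
  (Finset.univ.filter fun j => r j < r i).card +
  (Finset.univ.filter fun j => j ≤ i ∧ r j = r i).card

/-- The weight `w(Xᵢ) = g(rank(rᵢ)/n)`. -/
noncomputable def sampleWeight {H : Type*} [NormedAddCommGroup H] {n : ℕ}
    (g : ℝ → ℝ) (α : ℝ) (X : Fin n → H) (i : Fin n) : ℝ :=
  g ((sampleRank (sampleRadius α X) i : ℝ) / n)

/-- The trimmed mean `μ̂ = Σᵢ w(Xᵢ)Xᵢ / Σᵢ w(Xᵢ)`. -/
noncomputable def trimmedMean {H : Type*} [NormedAddCommGroup H] [InnerProductSpace ℝ H]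
    {n : ℕ} (g : ℝ → ℝ) (α : ℝ) (X : Fin n → H) : H :=
  (∑ i, sampleWeight g α X i)⁻¹ • ∑ i, sampleWeight g α X i • X i

/-- The trimmed covariance operator
`Ĉ(h) = Σᵢ w(Xᵢ)⟨Xᵢ − μ̂, h⟩(Xᵢ − μ̂) / Σᵢ w(Xᵢ)`, as a continuous linear map. -/
noncomputable def trimmedCov {H : Type*} [NormedAddCommGroup H] [InnerProductSpace ℝ H]
    [CompleteSpace H] {n : ℕ} (g : ℝ → ℝ) (α : ℝ) (X : Fin n → H) : H →L[ℝ] H :=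
  (∑ i, sampleWeight g α X i)⁻¹ •
    ∑ i, sampleWeight g α X i •
      ((innerSL ℝ (X i - trimmedMean g α X)).smulRight (X i - trimmedMean g α X))

lemma kthSmallest_smul {n : ℕ} (f : Fin n → ℝ) (k : ℕ) {c : ℝ} (hc : 0 < c) :
    kthSmallest (fun j => c * f j) k = c * kthSmallest f k := by
  unfold kthSmallest
  have : c * sInf {t : ℝ | k ≤ (Finset.univ.filter fun j => f j ≤ t).card}
      = c • sInf {t : ℝ | k ≤ (Finset.univ.filter fun j => f j ≤ t).card} := rfl
  rw [this, ← Real.sInf_smul_of_nonneg hc.le]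
  congr 1
  ext t
  simp only [Set.mem_setOf_eq, Set.mem_smul_set, smul_eq_mul]
  have key : (Finset.univ.filter fun j => c * f j ≤ t)
      = (Finset.univ.filter fun j => f j ≤ c⁻¹ * t) := by
    apply Finset.filter_congr
    intro j _
    rw [mul_comm c⁻¹, ← div_eq_mul_inv, le_div_iff₀ hc, mul_comm]
  constructor
  · intro h
    exact ⟨c⁻¹ * t, by rwa [key] at h, by field_simp⟩
  · rintro ⟨s, hs, rfl⟩
    rw [key]
    convert hs using 3
    field_simp

lemma sampleRank_smul {n : ℕ} (r : Fin n → ℝ) {c : ℝ} (hc : 0 < c) (i : Fin n) :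
    sampleRank (fun j => c * r j) i = sampleRank r i := by
  unfold sampleRank
  congr 1
  · congr 1
    apply Finset.filter_congr
    intro j _
    simp [mul_lt_mul_iff_right₀ hc]
  · congr 1
    apply Finset.filter_congr
    intro j _
    simp [mul_right_inj' hc.ne']

lemma sampleWeight_transformed {H : Type*} [NormedAddCommGroup H] [InnerProductSpace ℝ H]
    {n : ℕ} (g : ℝ → ℝ) (α : ℝ) (X : Fin n → H)
    (U : H ≃ₗᵢ[ℝ] H) {a : ℝ} (ha : a ≠ 0) (b : H)
    (Xt : Fin n → H) (hXt : ∀ i, Xt i = a • U (X i) + b) :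
    sampleWeight g α Xt = sampleWeight g α X := by
  have hradius : sampleRadius α Xt = fun i => |a| * sampleRadius α X i := by
    funext i
    unfold sampleRadius
    have : (fun j => ‖Xt i - Xt j‖) = fun j => |a| * ‖X i - X j‖ := by
      funext j
      rw [hXt i, hXt j]
      have : a • U (X i) + b - (a • U (X j) + b) = a • U (X i - X j) := by
        rw [map_sub, smul_sub]; abel
      rw [this, norm_smul, Real.norm_eq_abs, U.norm_map]
    rw [this, kthSmallest_smul _ _ (abs_pos.mpr ha)]
  funext i
  unfold sampleWeight
  rw [hradius, sampleRank_smul _ (abs_pos.mpr ha)]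

/-- If `X̃ᵢ = a • U Xᵢ + b` with `U` unitary, `a ≠ 0`, `b ∈ H`, then the
trimmed covariance operator of the transformed sample satisfies `C̃ = a² U ∘ Ĉ ∘ U*`,
where `U*` is the adjoint of `U`. -/
theorem trimmedCov_equivariance
    {H : Type*} [NormedAddCommGroup H] [InnerProductSpace ℝ H] [CompleteSpace H]
    [SecondCountableTopology H]
    {n : ℕ} (X : Fin n → H) (α β : ℝ)
    (hα : 0 < α) (hα' : α ≤ 1 / 2) (hβ : 0 ≤ β) (hβ' : β ≤ 1 / 2)
    (g : ℝ → ℝ)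
    (hg_nonneg : ∀ t ∈ Set.Icc (0 : ℝ) 1, 0 ≤ g t)
    (hg_bdd : BddAbove (g '' Set.Icc (0 : ℝ) 1))
    (hg_mono : AntitoneOn g (Set.Icc (0 : ℝ) 1))
    (hg_pos : ∀ t ∈ Set.Icc (0 : ℝ) 1, t < 1 - β → 0 < g t)
    (hg_zero : ∀ t ∈ Set.Icc (0 : ℝ) 1, 1 - β ≤ t → g t = 0)
    (hw_pos : 0 < ∑ i, sampleWeight g α X i)
    (U : H ≃ₗᵢ[ℝ] H) (a : ℝ) (ha : a ≠ 0) (b : H)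
    (Xt : Fin n → H) (hXt : ∀ i, Xt i = a • U (X i) + b) :
    trimmedCov g α Xt =
      a ^ 2 • ((U.toLinearIsometry.toContinuousLinearMap.comp (trimmedCov g α X)).comp
        (ContinuousLinearMap.adjoint U.toLinearIsometry.toContinuousLinearMap)) := by
  have hw : sampleWeight g α Xt = sampleWeight g α X :=
    sampleWeight_transformed g α X U ha b Xt hXt
  set w := sampleWeight g α X with hw_def
  set W := ∑ i, w i with hW_def
  have hWne : W ≠ 0 := hw_pos.ne'
  have hmean : trimmedMean g α Xt = a • U (trimmedMean g α X) + b := by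
    unfold trimmedMean
    rw [hw]
    have : ∑ i, w i • Xt i = a • U (∑ i, w i • X i) + W • b := by
      rw [map_sum, Finset.smul_sum, hW_def, Finset.sum_smul, ← Finset.sum_add_distrib]
      apply Finset.sum_congr rfl
      intro i _
      rw [hXt i, smul_add, map_smul, smul_comm a (w i)]
    rw [this, smul_add, smul_comm (W⁻¹) a, ← map_smul, inv_smul_smul₀ hWne]
  have hdiff : ∀ i, Xt i - trimmedMean g α Xt = a • U (X i - trimmedMean g α X) := by
    intro i
    rw [hmean, hXt i, map_sub, smul_sub]
    abel
  ext h
  set A := U.toLinearIsometry.toContinuousLinearMap with hA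
  have hAapp : ∀ x, A x = U x := fun _ => rfl
  have hadj : ∀ y x, ⟪x, ContinuousLinearMap.adjoint A y⟫ = ⟪U x, y⟫ := by
    intro y x
    rw [ContinuousLinearMap.adjoint_inner_right]
    rfl
  simp only [trimmedCov, hw, ← hw_def, ← hW_def, ContinuousLinearMap.coe_smul',
    Pi.smul_apply, ContinuousLinearMap.coe_comp', Function.comp_apply,
    ContinuousLinearMap.coe_sum', Finset.sum_apply,
    ContinuousLinearMap.smul_apply, ContinuousLinearMap.smulRight_apply, innerSL_apply_apply]
  rw [hAapp, map_smul, smul_comm (a ^ 2) W⁻¹]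
  congr 1
  rw [map_sum, Finset.smul_sum]
  apply Finset.sum_congr rfl
  intro i _
  rw [hdiff i, real_inner_smul_left, ← hadj h, map_smul, map_smul]
  rw [smul_smul, smul_smul, smul_smul, smul_smul]
  congr 1
  ring
end

section
/- Suppose α ∈ (0, 1/2], β ∈ [0, 1/2], ⌈αn⌉ ≥ 3, and the sample points X₁,…,Xₙ are not all identical. If k = min(⌈αn⌉, ⌊βn⌋ + 2), then the trimmed mean breaks down under k-contamination: there exists a sequence (X̃⁽ᵐ⁾) of k-contaminated samples such that ‖μ̂(X̃⁽ᵐ⁾)‖ → ∞ as m → ∞. Consequently the finite-sample breakdown point of the trimmed mean equals min(⌈αn⌉, ⌊βn⌋ + 2)/n. -/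
open scoped BigOperators RealInnerProductSpace

open scoped Classical in
/-- `X̃` is a `k`-contaminated version of the sample `X`: `X̃ᵢ = Xᵢ` for at least `n − k`
indices `i`. -/
noncomputable def Contaminated {H : Type*} {n : ℕ} (k : ℕ) (X Xt : Fin n → H) : Prop :=
  n - k ≤ (Finset.univ.filter fun i => Xt i = X i).card
section Helpers

open Finset

variable {n : ℕ}

lemma kthSmallest_le {f : Fin n → ℝ} (hf : ∀ j, 0 ≤ f j) {k : ℕ} (hk : 1 ≤ k) {t : ℝ}
    (h : k ≤ (Finset.univ.filter fun j => f j ≤ t).card) : kthSmallest f k ≤ t := by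
  refine csInf_le ⟨0, fun x hx => ?_⟩ h
  simp only [Set.mem_setOf_eq] at hx
  obtain ⟨j, hj⟩ := Finset.card_pos.mp (lt_of_lt_of_le hk hx)
  simp only [Finset.mem_filter] at hj
  exact le_trans (hf j) hj.2

lemma le_kthSmallest {f : Fin n → ℝ} {k : ℕ} (hn : 0 < n) (hkn : k ≤ n) {c : ℝ}
    (h : ∀ t, k ≤ (Finset.univ.filter fun j => f j ≤ t).card → c ≤ t) :
    c ≤ kthSmallest f k := by
  have hne : (Finset.univ : Finset (Fin n)).Nonempty := ⟨⟨0, hn⟩, Finset.mem_univ _⟩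
  refine le_csInf ⟨Finset.univ.sup' hne f, ?_⟩ (fun t ht => h t ht)
  have heq : (Finset.univ.filter fun j => f j ≤ Finset.univ.sup' hne f) = Finset.univ := by
    refine Finset.filter_true_of_mem fun j _ => ?_
    exact Finset.le_sup' f (Finset.mem_univ j)
  simp only [Set.mem_setOf_eq, heq, Finset.card_univ, Fintype.card_fin]
  exact hkn

lemma kthSmallest_nonneg {f : Fin n → ℝ} (hf : ∀ j, 0 ≤ f j) {k : ℕ}
    (hn : 0 < n) (hk : 1 ≤ k) (hkn : k ≤ n) : 0 ≤ kthSmallest f k := by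
  refine le_kthSmallest hn hkn fun t ht => ?_
  obtain ⟨j, hj⟩ := Finset.card_pos.mp (lt_of_lt_of_le hk ht)
  simp only [Finset.mem_filter] at hj
  exact le_trans (hf j) hj.2

lemma one_le_sampleRank (r : Fin n → ℝ) (i : Fin n) : 1 ≤ sampleRank r i := by
  have hmem : i ∈ Finset.univ.filter (fun j => j ≤ i ∧ r j = r i) := by simp
  have := Finset.card_pos.mpr ⟨i, hmem⟩
  unfold sampleRank; omega

lemma sampleRank_le (r : Fin n → ℝ) (i : Fin n) : sampleRank r i ≤ n := by
  unfold sampleRank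
  rw [← Finset.card_union_of_disjoint (s := Finset.univ.filter (fun j => r j < r i)) (t := Finset.univ.filter (fun j => j ≤ i ∧ r j = r i))]
  · calc (Finset.univ.filter (fun j => r j < r i) ∪ Finset.univ.filter (fun j => j ≤ i ∧ r j = r i)).card
        ≤ (Finset.univ : Finset (Fin n)).card := Finset.card_le_univ _
      _ = n := by simp
  · rw [Finset.disjoint_left]
    intro a ha hb
    simp only [Finset.mem_filter] at ha hb
    exact absurd hb.2.2 (ne_of_lt ha.2)

lemma rank_div_mem_Icc (hn : 0 < n) (r : Fin n → ℝ) (i : Fin n) :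
    ((sampleRank r i : ℝ) / n) ∈ Set.Icc (0 : ℝ) 1 := by
  constructor
  · positivity
  · rw [div_le_one (by exact_mod_cast hn)]
    exact_mod_cast sampleRank_le r i

end Helpers
section Bounded

open Finset
open scoped Classical

lemma trimmedMean_norm_le
    {H : Type*} [NormedAddCommGroup H] [InnerProductSpace ℝ H]
    {n : ℕ} (X Y : Fin n → H) (α β : ℝ) (g : ℝ → ℝ)
    (hg_nonneg : ∀ t ∈ Set.Icc (0 : ℝ) 1, 0 ≤ g t)
    (hg_zero : ∀ t ∈ Set.Icc (0 : ℝ) 1, 1 - β ≤ t → g t = 0)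
    (hn : 0 < n) (hA1 : 1 ≤ ⌈α * n⌉₊) (h2A : 2 * ⌈α * n⌉₊ ≤ n + 1)
    {k' : ℕ} (hk'A : k' + 1 ≤ ⌈α * n⌉₊) (hk'β : (k' : ℝ) ≤ β * n + 1)
    (hcont : Contaminated k' X Y)
    {R : ℝ} (hR : ∀ i, ‖X i‖ ≤ R) (hR0 : 0 ≤ R) :
    ‖trimmedMean g α Y‖ ≤ 3 * R := by
  unfold Contaminated at hcont
  set A := ⌈α * (n : ℝ)⌉₊ with hA
  have hk'n : k' ≤ n := by omega
  have hAn : A ≤ n := by omega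
  have hnA : A ≤ n - k' := by omega
  have hcard : (Finset.univ.filter fun i => Y i = X i).card
      + (Finset.univ.filter fun i => ¬(Y i = X i)).card = n := by
    rw [Finset.card_filter_add_card_filter_not]
    simp
  have hbad : (Finset.univ.filter fun i => ¬(Y i = X i)).card ≤ k' := by omega
  -- radii are nonnegative
  have hrad0 : ∀ i, 0 ≤ sampleRadius α Y i := fun i =>
    kthSmallest_nonneg (fun j => norm_nonneg _) hn hA1 hAn
  -- good points have radius at most 2R
  have hgood : ∀ i ∈ (Finset.univ.filter fun i => Y i = X i),
      sampleRadius α Y i ≤ 2 * R := by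
    intro i hi
    simp only [Finset.mem_filter] at hi
    refine kthSmallest_le (fun j => norm_nonneg _) hA1 ?_
    have hsub : (Finset.univ.filter fun j => Y j = X j) ⊆
        (Finset.univ.filter fun j => ‖Y i - Y j‖ ≤ 2 * R) := by
      intro j hj
      simp only [Finset.mem_filter] at hj ⊢
      refine ⟨Finset.mem_univ _, ?_⟩
      rw [hi.2, hj.2]
      calc ‖X i - X j‖ ≤ ‖X i‖ + ‖X j‖ := norm_sub_le _ _
        _ ≤ 2 * R := by linarith [hR i, hR j]
    have := Finset.card_le_card hsub
    omega
  -- far points get weight zero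
  have hfar : ∀ i, 3 * R < ‖Y i‖ → sampleWeight g α Y i = 0 := by
    intro i hi
    have hri : ‖Y i‖ - R ≤ sampleRadius α Y i := by
      refine le_kthSmallest hn hAn fun t ht => ?_
      have hnotsub : ¬ ((Finset.univ.filter fun j => ‖Y i - Y j‖ ≤ t) ⊆
          (Finset.univ.filter fun j => ¬(Y j = X j))) := by
        intro hsub
        have := Finset.card_le_card hsub
        omega
      obtain ⟨j, hj1, hj2⟩ := Finset.not_subset.mp hnotsub
      simp only [Finset.mem_filter, Finset.mem_univ, true_and, not_not] at hj1 hj2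
      rw [hj2] at hj1
      have h1 : ‖Y i‖ - ‖X j‖ ≤ ‖Y i - X j‖ := norm_sub_norm_le _ _
      have := hR j
      linarith
    have hrank : n - k' + 1 ≤ sampleRank (sampleRadius α Y) i := by
      have hsub : (Finset.univ.filter fun j => Y j = X j) ⊆
          (Finset.univ.filter fun j => sampleRadius α Y j < sampleRadius α Y i) := by
        intro j hj
        simp only [Finset.mem_filter, Finset.mem_univ, true_and] at hj ⊢
        have := hgood j (by simp [hj])
        linarith
      have h1 := Finset.card_le_card hsub
      have h2 : 1 ≤ (Finset.univ.filter fun j =>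
          j ≤ i ∧ sampleRadius α Y j = sampleRadius α Y i).card :=
        Finset.card_pos.mpr ⟨i, by simp⟩
      unfold sampleRank
      omega
    unfold sampleWeight
    refine hg_zero _ (rank_div_mem_Icc hn _ _) ?_
    have hnpos : (0 : ℝ) < n := by exact_mod_cast hn
    rw [le_div_iff₀ hnpos]
    have hcast : ((n - k' + 1 : ℕ) : ℝ) = (n : ℝ) - k' + 1 := by
      push_cast [hk'n]
      ring
    have h3 : ((n - k' + 1 : ℕ) : ℝ) ≤ (sampleRank (sampleRadius α Y) i : ℝ) := by
      exact_mod_cast hrank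
    rw [hcast] at h3
    nlinarith
  -- put it together
  have hw0 : ∀ i, 0 ≤ sampleWeight g α Y i := fun i =>
    hg_nonneg _ (rank_div_mem_Icc hn _ _)
  have hterm : ∀ i : Fin n, ‖sampleWeight g α Y i • Y i‖ ≤ sampleWeight g α Y i * (3 * R) := by
    intro i
    rw [norm_smul, Real.norm_eq_abs, abs_of_nonneg (hw0 i)]
    by_cases h : 3 * R < ‖Y i‖
    · rw [hfar i h]; simp
    · exact mul_le_mul_of_nonneg_left (not_lt.mp h) (hw0 i)
  have hT : ‖∑ i, sampleWeight g α Y i • Y i‖ ≤ (∑ i, sampleWeight g α Y i) * (3 * R) := by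
    calc ‖∑ i, sampleWeight g α Y i • Y i‖ ≤ ∑ i, ‖sampleWeight g α Y i • Y i‖ :=
          norm_sum_le _ _
      _ ≤ ∑ i, sampleWeight g α Y i * (3 * R) := Finset.sum_le_sum fun i _ => hterm i
      _ = (∑ i, sampleWeight g α Y i) * (3 * R) := (Finset.sum_mul _ _ _).symm
  have hs : 0 ≤ ∑ i, sampleWeight g α Y i := Finset.sum_nonneg fun i _ => hw0 i
  unfold trimmedMean
  rw [norm_smul, Real.norm_eq_abs, abs_of_nonneg (inv_nonneg.mpr hs)]
  calc (∑ i, sampleWeight g α Y i)⁻¹ * ‖∑ i, sampleWeight g α Y i • Y i‖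
      ≤ (∑ i, sampleWeight g α Y i)⁻¹ * ((∑ i, sampleWeight g α Y i) * (3 * R)) :=
        mul_le_mul_of_nonneg_left hT (inv_nonneg.mpr hs)
    _ = ((∑ i, sampleWeight g α Y i)⁻¹ * (∑ i, sampleWeight g α Y i)) * (3 * R) := by ring
    _ ≤ 1 * (3 * R) := by
        refine mul_le_mul_of_nonneg_right ?_ (by linarith)
        rcases eq_or_lt_of_le hs with h | h
        · rw [← h]; simp
        · rw [inv_mul_cancel₀ (ne_of_gt h)]
    _ = 3 * R := one_mul _

end Bounded
section Construction

open Finset Filter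
open scoped Classical

lemma card_filter_val_lt {n k : ℕ} (hkn : k ≤ n) :
    (Finset.univ.filter fun i : Fin n => (i : ℕ) < k).card = k := by
  have : (Finset.univ.filter fun i : Fin n => (i : ℕ) < k)
      = Finset.map (Fin.castLEEmb hkn) Finset.univ := by
    ext i
    simp only [Finset.mem_filter, Finset.mem_univ, true_and, Finset.mem_map]
    constructor
    · intro h
      exact ⟨⟨(i : ℕ), h⟩, by ext; simp⟩
    · rintro ⟨a, -, rfl⟩
      simpa using a.isLt
  rw [this, Finset.card_map, Finset.card_univ, Fintype.card_fin]

set_option maxHeartbeats 1000000 in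
lemma exists_breakdown_seq
    {H : Type*} [NormedAddCommGroup H] [InnerProductSpace ℝ H]
    {n : ℕ} (X : Fin n → H) (α β : ℝ)
    (hα : 0 < α) (hα' : α ≤ 1 / 2) (hβ : 0 ≤ β) (hβ' : β ≤ 1 / 2)
    (g : ℝ → ℝ)
    (hg_nonneg : ∀ t ∈ Set.Icc (0 : ℝ) 1, 0 ≤ g t)
    (hg_bdd : BddAbove (g '' Set.Icc (0 : ℝ) 1))
    (hg_pos : ∀ t ∈ Set.Icc (0 : ℝ) 1, t < 1 - β → 0 < g t)
    (hn : 3 ≤ ⌈α * n⌉₊)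
    (hX : ∃ i j, X i ≠ X j)
    (k : ℕ) (hk : k = min ⌈α * n⌉₊ (⌊β * n⌋₊ + 2)) :
    ∃ Xt : ℕ → Fin n → H, (∀ m, Contaminated k X (Xt m)) ∧
      Filter.Tendsto (fun m => ‖trimmedMean g α (Xt m)‖) Filter.atTop Filter.atTop := by
  obtain ⟨i1, j1, hij⟩ := hX
  set A := ⌈α * (n : ℝ)⌉₊ with hAdef
  -- basic numerology
  have h2A : 2 * A ≤ n + 1 := by
    have h1 : (A : ℝ) < α * n + 1 := Nat.ceil_lt_add_one (by positivity)
    have h2 : α * n ≤ (n : ℝ) / 2 := by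
      have : (0 : ℝ) ≤ n := Nat.cast_nonneg n
      nlinarith
    have h3 : ((2 * A : ℕ) : ℝ) < ((n + 2 : ℕ) : ℝ) := by push_cast; linarith
    have := Nat.cast_lt.mp h3
    omega
  have hn5 : 5 ≤ n := by omega
  have hn0 : 0 < n := by omega
  have hnR : (0 : ℝ) < n := by exact_mod_cast hn0
  have hA1 : 1 ≤ A := by omega
  have hAn : A ≤ n := by omega
  have hkA : k ≤ A := by rw [hk]; exact min_le_left _ _
  have hk2 : 2 ≤ k := by
    rw [hk]; exact le_min (by omega) (by omega)
  have hkn : k ≤ n := le_trans hkA hAn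
  -- the direction of escape
  set u := X i1 - X j1 with hu
  have hu0 : 0 < ‖u‖ := by
    rw [norm_pos_iff, hu, sub_ne_zero]; exact hij
  -- bound on the sample
  have hne : (Finset.univ : Finset (Fin n)).Nonempty := ⟨⟨0, hn0⟩, Finset.mem_univ _⟩
  set R := Finset.univ.sup' hne (fun i => ‖X i‖) with hRdef
  have hR : ∀ i, ‖X i‖ ≤ R := fun i => Finset.le_sup' (fun j => ‖X j‖) (Finset.mem_univ i)
  have hR0 : 0 ≤ R := le_trans (norm_nonneg (X i1)) (hR i1)
  -- bound on g
  obtain ⟨C, hC⟩ := hg_bdd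
  have hCle : ∀ t ∈ Set.Icc (0 : ℝ) 1, g t ≤ C := fun t ht => hC ⟨t, ht, rfl⟩
  -- the contaminated samples
  set sam : ℕ → Fin n → H := fun c i => if (i : ℕ) < k then (c : ℝ) • u else X i with hsam
  have hsam_lt : ∀ c, ∀ i : Fin n, (i : ℕ) < k → sam c i = (c : ℝ) • u := by
    intro c i h; simp [hsam, h]
  have hsam_ge : ∀ c, ∀ i : Fin n, k ≤ (i : ℕ) → sam c i = X i := by
    intro c i h; simp [hsam, Nat.not_lt.mpr h]
  have hcardlt : (Finset.univ.filter fun i : Fin n => (i : ℕ) < k).card = k :=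
    card_filter_val_lt hkn
  have hcardge : (Finset.univ.filter fun i : Fin n => k ≤ (i : ℕ)).card = n - k := by
    have h1 : (Finset.univ.filter fun i : Fin n => (i : ℕ) < k).card
        + (Finset.univ.filter fun i : Fin n => ¬((i : ℕ) < k)).card = n := by
      rw [Finset.card_filter_add_card_filter_not]; simp
    have h2 : (Finset.univ.filter fun i : Fin n => ¬((i : ℕ) < k))
        = (Finset.univ.filter fun i : Fin n => k ≤ (i : ℕ)) := by
      apply Finset.filter_congr; intro i _; simp [Nat.not_lt]
    rw [← h2]; omega
  -- contamination
  have hconta : ∀ c, Contaminated k X (sam c) := by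
    intro c
    unfold Contaminated
    have hsub : (Finset.univ.filter fun i : Fin n => k ≤ (i : ℕ)) ⊆
        (Finset.univ.filter fun i => sam c i = X i) := by
      intro i hi
      simp only [Finset.mem_filter, Finset.mem_univ, true_and] at hi ⊢
      exact hsam_ge c i hi
    have := Finset.card_le_card hsub
    omega
  -- the distinguished contaminated index
  set i₀ : Fin n := ⟨0, hn0⟩ with hi₀def
  have hi₀k : (i₀ : ℕ) < k := (by omega : (0:ℕ) < k)
  -- tie set at i₀ is a singleton
  have htie : ∀ r : Fin n → ℝ,
      (Finset.univ.filter fun j => j ≤ i₀ ∧ r j = r i₀).card = 1 := by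
    intro r
    have : (Finset.univ.filter fun j => j ≤ i₀ ∧ r j = r i₀) = {i₀} := by
      ext j
      simp only [Finset.mem_filter, Finset.mem_univ, true_and, Finset.mem_singleton]
      constructor
      · rintro ⟨hj, -⟩
        have h0 : (j : ℕ) ≤ 0 := hj
        exact Fin.ext (le_antisymm h0 (Nat.zero_le _))
      · rintro rfl
        exact ⟨le_refl _, rfl⟩
    rw [this, Finset.card_singleton]
  -- radii are nonnegative
  have hrad0 : ∀ c i, 0 ≤ sampleRadius α (sam c) i := fun c i =>
    kthSmallest_nonneg (fun j => norm_nonneg _) hn0 hA1 hAn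
  -- key case analysis: a positive lower bound on the weight of i₀
  obtain ⟨w0, M₀, hw0, hkey⟩ : ∃ w0 : ℝ, ∃ M₀ : ℕ, 0 < w0 ∧
      ∀ c : ℕ, M₀ ≤ c → w0 ≤ sampleWeight g α (sam c) i₀ := by
    rcases le_or_gt A (⌊β * n⌋₊ + 2) with hcase | hcase
    · -- k = A : the contaminants cluster gives i₀ radius 0 hence rank 1
      have hkeq : k = A := by rw [hk]; exact min_eq_left hcase
      refine ⟨g (1 / n), 0, ?_, ?_⟩
      · refine hg_pos _ ⟨by positivity, ?_⟩ ?_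
        · rw [div_le_one hnR]; exact_mod_cast hn0
        · have h5 : (5 : ℝ) ≤ n := by exact_mod_cast hn5
          have : (1 : ℝ) / n ≤ 1 / 5 := by
            apply one_div_le_one_div_of_le <;> linarith
          linarith
      · intro c _
        have hrr : sampleRadius α (sam c) i₀ = 0 := by
          refine le_antisymm ?_ (hrad0 c i₀)
          refine kthSmallest_le (fun j => norm_nonneg _) hA1 ?_
          have hsub : (Finset.univ.filter fun j : Fin n => (j : ℕ) < k) ⊆
              (Finset.univ.filter fun j => ‖sam c i₀ - sam c j‖ ≤ 0) := by
            intro j hj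
            simp only [Finset.mem_filter, Finset.mem_univ, true_and] at hj ⊢
            rw [hsam_lt c i₀ hi₀k, hsam_lt c j hj, sub_self, norm_zero]
          have := Finset.card_le_card hsub
          omega
        have hrank : sampleRank (sampleRadius α (sam c)) i₀ = 1 := by
          unfold sampleRank
          have h1 : (Finset.univ.filter fun j =>
              sampleRadius α (sam c) j < sampleRadius α (sam c) i₀) = ∅ := by
            rw [Finset.filter_eq_empty_iff]
            intro j _
            rw [hrr]
            exact not_lt.mpr (hrad0 c j)
          rw [h1, htie]
          simp
        unfold sampleWeight
        rw [hrank]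
        norm_num
    · -- k = ⌊βn⌋ + 2 < A : the contaminants are far away and get the top ranks
      have hkeq : k = ⌊β * n⌋₊ + 2 := by rw [hk]; exact min_eq_right (le_of_lt hcase)
      have hkA' : k + 1 ≤ A := by omega
      refine ⟨g (((n - k + 1 : ℕ) : ℝ) / n), ⌈(3 * R + 1) / ‖u‖⌉₊, ?_, ?_⟩
      · have hmem : (((n - k + 1 : ℕ) : ℝ) / n) ∈ Set.Icc (0 : ℝ) 1 := by
          constructor
          · positivity
          · rw [div_le_one hnR]
            exact_mod_cast (by omega : n - k + 1 ≤ n)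
        refine hg_pos _ hmem ?_
        have hcast : ((n - k + 1 : ℕ) : ℝ) = (n : ℝ) - k + 1 := by
          push_cast [hkn]; ring
        rw [hcast, div_lt_iff₀ hnR]
        have hfl : β * n < (⌊β * n⌋₊ : ℝ) + 1 := Nat.lt_floor_add_one _
        have hkc : (k : ℝ) = (⌊β * n⌋₊ : ℝ) + 2 := by exact_mod_cast hkeq
        nlinarith
      · intro c hc
        have hcR : 3 * R < (c : ℝ) * ‖u‖ := by
          have h1 : (3 * R + 1) / ‖u‖ ≤ (c : ℝ) :=
            le_trans (Nat.le_ceil _) (by exact_mod_cast hc)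
          rw [div_le_iff₀ hu0] at h1
          nlinarith
        -- good points have small radii
        have hgood : ∀ i : Fin n, k ≤ (i : ℕ) → sampleRadius α (sam c) i ≤ 2 * R := by
          intro i hi
          refine kthSmallest_le (fun j => norm_nonneg _) hA1 ?_
          have hsub : (Finset.univ.filter fun j : Fin n => k ≤ (j : ℕ)) ⊆
              (Finset.univ.filter fun j => ‖sam c i - sam c j‖ ≤ 2 * R) := by
            intro j hj
            simp only [Finset.mem_filter, Finset.mem_univ, true_and] at hj ⊢
            rw [hsam_ge c i hi, hsam_ge c j hj]
            calc ‖X i - X j‖ ≤ ‖X i‖ + ‖X j‖ := norm_sub_le _ _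
              _ ≤ 2 * R := by linarith [hR i, hR j]
          have := Finset.card_le_card hsub
          omega
        -- the contaminant radius is large
        have hbig : (c : ℝ) * ‖u‖ - R ≤ sampleRadius α (sam c) i₀ := by
          refine le_kthSmallest hn0 hAn fun t ht => ?_
          have hnotsub : ¬ ((Finset.univ.filter fun j => ‖sam c i₀ - sam c j‖ ≤ t) ⊆
              (Finset.univ.filter fun j : Fin n => (j : ℕ) < k)) := by
            intro hsub
            have := Finset.card_le_card hsub
            omega
          obtain ⟨j, hj1, hj2⟩ := Finset.not_subset.mp hnotsub
          simp only [Finset.mem_filter, Finset.mem_univ, true_and, not_lt] at hj1 hj2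
          rw [hsam_ge c j hj2, hsam_lt c i₀ hi₀k] at hj1
          have h1 : ‖(c : ℝ) • u‖ - ‖X j‖ ≤ ‖(c : ℝ) • u - X j‖ := norm_sub_norm_le _ _
          have h2 : ‖(c : ℝ) • u‖ = (c : ℝ) * ‖u‖ := by
            rw [norm_smul, Real.norm_eq_abs, abs_of_nonneg (Nat.cast_nonneg c)]
          have := hR j
          linarith
        -- all contaminants share the radius of i₀
        have hsame : ∀ j : Fin n, (j : ℕ) < k →
            sampleRadius α (sam c) j = sampleRadius α (sam c) i₀ := by
          intro j hj
          unfold sampleRadius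
          rw [hsam_lt c j hj, hsam_lt c i₀ hi₀k]
        have hrank : sampleRank (sampleRadius α (sam c)) i₀ = n - k + 1 := by
          unfold sampleRank
          have h1 : (Finset.univ.filter fun j =>
              sampleRadius α (sam c) j < sampleRadius α (sam c) i₀)
              = (Finset.univ.filter fun j : Fin n => k ≤ (j : ℕ)) := by
            ext j
            simp only [Finset.mem_filter, Finset.mem_univ, true_and]
            constructor
            · intro hlt
              by_contra hjk
              rw [hsame j (by omega)] at hlt
              exact lt_irrefl _ hlt
            · intro hjk
              calc sampleRadius α (sam c) j ≤ 2 * R := hgood j hjk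
                _ < (c : ℝ) * ‖u‖ - R := by linarith
                _ ≤ sampleRadius α (sam c) i₀ := hbig
          rw [h1, hcardge, htie]
        unfold sampleWeight
        rw [hrank]
  -- common tail: the blowup estimate
  have hwnn : ∀ c i, 0 ≤ sampleWeight g α (sam c) i := fun c i =>
    hg_nonneg _ (rank_div_mem_Icc hn0 _ _)
  have hwub : ∀ c i, sampleWeight g α (sam c) i ≤ C := fun c i =>
    hCle _ (rank_div_mem_Icc hn0 _ _)
  have hC0 : 0 < C := lt_of_lt_of_le hw0 (le_trans (hkey M₀ le_rfl) (hwub M₀ i₀))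
  have hnC : 0 < (n : ℝ) * C := by positivity
  have hlow : ∀ c : ℕ, M₀ ≤ c →
      ((n : ℝ) * C)⁻¹ * (w0 * ‖u‖ * c - (n : ℝ) * C * R) ≤ ‖trimmedMean g α (sam c)‖ := by
    intro c hc
    set w := sampleWeight g α (sam c) with hwdef
    set P1 := ∑ i ∈ Finset.univ.filter (fun i : Fin n => (i : ℕ) < k), w i • sam c i with hP1
    set P2 := ∑ i ∈ Finset.univ.filter (fun i : Fin n => ¬((i : ℕ) < k)), w i • sam c i with hP2
    have hsplit : P1 + P2 = ∑ i, w i • sam c i :=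
      Finset.sum_filter_add_sum_filter_not Finset.univ _ _
    have hW : w0 ≤ ∑ i ∈ Finset.univ.filter (fun i : Fin n => (i : ℕ) < k), w i := by
      refine le_trans (hkey c hc) (Finset.single_le_sum (fun i _ => hwnn c i) ?_)
      simp only [Finset.mem_filter, Finset.mem_univ, true_and]
      exact hi₀k
    have hP1norm : w0 * ‖u‖ * c ≤ ‖P1‖ := by
      have h1 : P1 = (∑ i ∈ Finset.univ.filter (fun i : Fin n => (i : ℕ) < k), w i)
          • ((c : ℝ) • u) := by
        rw [hP1, Finset.sum_smul]
        refine Finset.sum_congr rfl fun i hi => ?_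
        simp only [Finset.mem_filter, Finset.mem_univ, true_and] at hi
        rw [hsam_lt c i hi]
      rw [h1, norm_smul, norm_smul, Real.norm_eq_abs, Real.norm_eq_abs,
        abs_of_nonneg (le_trans (le_of_lt hw0) hW), abs_of_nonneg (Nat.cast_nonneg c)]
      have hc0 : (0 : ℝ) ≤ (c : ℝ) * ‖u‖ := by positivity
      nlinarith
    have hP2norm : ‖P2‖ ≤ (n : ℝ) * C * R := by
      calc ‖P2‖ ≤ ∑ i ∈ Finset.univ.filter (fun i : Fin n => ¬((i : ℕ) < k)),
            ‖w i • sam c i‖ := norm_sum_le _ _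
        _ ≤ ∑ _i ∈ Finset.univ.filter (fun i : Fin n => ¬((i : ℕ) < k)), C * R := by
            refine Finset.sum_le_sum fun i hi => ?_
            simp only [Finset.mem_filter, Finset.mem_univ, true_and, not_lt] at hi
            rw [hsam_ge c i hi, norm_smul, Real.norm_eq_abs, abs_of_nonneg (hwnn c i)]
            exact mul_le_mul (hwub c i) (hR i) (norm_nonneg _) (le_of_lt hC0)
        _ ≤ (n : ℝ) * (C * R) := by
            rw [Finset.sum_const, nsmul_eq_mul]
            refine mul_le_mul_of_nonneg_right ?_ (by positivity)
            have := Finset.card_le_univ (Finset.univ.filter fun i : Fin n => ¬((i : ℕ) < k))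
            simp only [Finset.card_univ, Fintype.card_fin] at this
            exact_mod_cast this
        _ = (n : ℝ) * C * R := by ring
    have hT : w0 * ‖u‖ * c - (n : ℝ) * C * R ≤ ‖∑ i, w i • sam c i‖ := by
      rw [← hsplit]
      have h1 : ‖P1‖ ≤ ‖P1 + P2‖ + ‖P2‖ := norm_le_add_norm_add _ _
      linarith
    have hs1 : w0 ≤ ∑ i, w i := by
      refine le_trans (hkey c hc) (Finset.single_le_sum (fun i _ => hwnn c i)
        (Finset.mem_univ i₀))
    have hs0 : 0 < ∑ i, w i := lt_of_lt_of_le hw0 hs1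
    have hs2 : ∑ i, w i ≤ (n : ℝ) * C := by
      calc ∑ i, w i ≤ ∑ _i : Fin n, C := Finset.sum_le_sum fun i _ => hwub c i
        _ = (n : ℝ) * C := by rw [Finset.sum_const, nsmul_eq_mul]; simp
    have hinv : ((n : ℝ) * C)⁻¹ ≤ (∑ i, w i)⁻¹ := by
      apply inv_anti₀ hs0 hs2
    unfold trimmedMean
    rw [norm_smul, Real.norm_eq_abs, abs_of_nonneg (inv_nonneg.mpr (le_of_lt hs0))]
    calc ((n : ℝ) * C)⁻¹ * (w0 * ‖u‖ * c - (n : ℝ) * C * R)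
        ≤ ((n : ℝ) * C)⁻¹ * ‖∑ i, w i • sam c i‖ :=
          mul_le_mul_of_nonneg_left hT (inv_nonneg.mpr (le_of_lt hnC))
      _ ≤ (∑ i, w i)⁻¹ * ‖∑ i, w i • sam c i‖ :=
          mul_le_mul_of_nonneg_right hinv (norm_nonneg _)
  -- assemble the sequence
  refine ⟨fun m => sam (m + M₀), fun m => hconta _, ?_⟩
  have ha : 0 < ((n : ℝ) * C)⁻¹ * (w0 * ‖u‖) := by positivity
  have htend : Filter.Tendsto
      (fun m : ℕ => ((n : ℝ) * C)⁻¹ * (w0 * ‖u‖ * m - (n : ℝ) * C * R))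
      Filter.atTop Filter.atTop := by
    have h1 : Filter.Tendsto (fun m : ℕ => (m : ℝ)) Filter.atTop Filter.atTop :=
      tendsto_natCast_atTop_atTop
    have h2 := h1.const_mul_atTop ha
    have h3 := Filter.tendsto_atTop_add_const_right Filter.atTop
      (-(((n : ℝ) * C)⁻¹ * ((n : ℝ) * C * R))) h2
    refine h3.congr fun m => by ring
  refine tendsto_atTop_mono (fun m => ?_) htend
  have h1 := hlow (m + M₀) (by omega)
  refine le_trans ?_ h1
  apply mul_le_mul_of_nonneg_left ?_ (inv_nonneg.mpr (le_of_lt hnC))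
  have : (w0 * ‖u‖) * (m : ℝ) ≤ (w0 * ‖u‖) * ((m + M₀ : ℕ) : ℝ) := by
    refine mul_le_mul_of_nonneg_left ?_ (by positivity)
    exact_mod_cast Nat.le_add_right m M₀
  nlinarith

end Construction
/-- If `⌈αn⌉ ≥ 3`, the sample points are not all identical, and
`k = min(⌈αn⌉, ⌊βn⌋ + 2)`, then the trimmed mean breaks down under `k`-contamination:
there is a sequence of `k`-contaminated samples along which `‖μ̂‖ → ∞`. Consequently the
finite-sample breakdown point of the trimmed mean — `k*/n` with `k*` the smallest `k`
admitting such a sequence — equals `min(⌈αn⌉, ⌊βn⌋ + 2)/n`. -/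
theorem trimmedMean_breakdown_point
    {H : Type*} [NormedAddCommGroup H] [InnerProductSpace ℝ H] [CompleteSpace H]
    [SecondCountableTopology H]
    {n : ℕ} (X : Fin n → H) (α β : ℝ)
    (hα : 0 < α) (hα' : α ≤ 1 / 2) (hβ : 0 ≤ β) (hβ' : β ≤ 1 / 2)
    (g : ℝ → ℝ)
    (hg_nonneg : ∀ t ∈ Set.Icc (0 : ℝ) 1, 0 ≤ g t)
    (hg_bdd : BddAbove (g '' Set.Icc (0 : ℝ) 1))
    (hg_mono : AntitoneOn g (Set.Icc (0 : ℝ) 1))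
    (hg_pos : ∀ t ∈ Set.Icc (0 : ℝ) 1, t < 1 - β → 0 < g t)
    (hg_zero : ∀ t ∈ Set.Icc (0 : ℝ) 1, 1 - β ≤ t → g t = 0)
    (hn : 3 ≤ ⌈α * n⌉₊)
    (hX : ∃ i j, X i ≠ X j)
    (k : ℕ) (hk : k = min ⌈α * n⌉₊ (⌊β * n⌋₊ + 2)) :
    (∃ Xt : ℕ → Fin n → H, (∀ m, Contaminated k X (Xt m)) ∧
        Filter.Tendsto (fun m => ‖trimmedMean g α (Xt m)‖) Filter.atTop Filter.atTop) ∧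
    ((sInf {k' : ℕ | ∃ Xt : ℕ → Fin n → H, (∀ m, Contaminated k' X (Xt m)) ∧
        Filter.Tendsto (fun m => ‖trimmedMean g α (Xt m)‖) Filter.atTop Filter.atTop} : ℕ)
      / (n : ℝ) = (min ⌈α * n⌉₊ (⌊β * n⌋₊ + 2) : ℕ) / (n : ℝ)) := by
  have hmain := exists_breakdown_seq X α β hα hα' hβ hβ' g hg_nonneg hg_bdd hg_pos hn hX k hk
  refine ⟨hmain, ?_⟩
  set S := {k' : ℕ | ∃ Xt : ℕ → Fin n → H, (∀ m, Contaminated k' X (Xt m)) ∧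
      Filter.Tendsto (fun m => ‖trimmedMean g α (Xt m)‖) Filter.atTop Filter.atTop} with hS
  have hkS : k ∈ S := hmain
  -- numerology
  set A := ⌈α * (n : ℝ)⌉₊ with hAdef
  have h2A : 2 * A ≤ n + 1 := by
    have h1 : (A : ℝ) < α * n + 1 := Nat.ceil_lt_add_one (by positivity)
    have h2 : α * n ≤ (n : ℝ) / 2 := by
      have : (0 : ℝ) ≤ n := Nat.cast_nonneg n
      nlinarith
    have h3 : ((2 * A : ℕ) : ℝ) < ((n + 2 : ℕ) : ℝ) := by push_cast; linarith
    have := Nat.cast_lt.mp h3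
    omega
  have hn0 : 0 < n := by omega
  have hA1 : 1 ≤ A := by omega
  have hkA : k ≤ A := by rw [hk]; exact min_le_left _ _
  have hkB : k ≤ ⌊β * n⌋₊ + 2 := by rw [hk]; exact min_le_right _ _
  have hne : (Finset.univ : Finset (Fin n)).Nonempty := ⟨⟨0, hn0⟩, Finset.mem_univ _⟩
  set R := Finset.univ.sup' hne (fun i => ‖X i‖) with hRdef
  have hR : ∀ i, ‖X i‖ ≤ R := fun i => Finset.le_sup' (fun j => ‖X j‖) (Finset.mem_univ i)
  have hR0 : 0 ≤ R := le_trans (norm_nonneg (X ⟨0, hn0⟩)) (hR ⟨0, hn0⟩)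
  have hlb : ∀ k' ∈ S, k ≤ k' := by
    intro k' hk'
    by_contra hlt
    push_neg at hlt
    obtain ⟨Xt, hcont, htend⟩ := hk'
    have hk'A : k' + 1 ≤ A := by omega
    have hk'β : (k' : ℝ) ≤ β * n + 1 := by
      have h1 : k' ≤ ⌊β * n⌋₊ + 1 := by omega
      have h2 : ((⌊β * n⌋₊ : ℕ) : ℝ) ≤ β * n := Nat.floor_le (by positivity)
      have h3 : ((k' : ℕ) : ℝ) ≤ ((⌊β * n⌋₊ + 1 : ℕ) : ℝ) := by exact_mod_cast h1
      push_cast at h3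
      linarith
    have hbd : ∀ m, ‖trimmedMean g α (Xt m)‖ ≤ 3 * R := fun m =>
      trimmedMean_norm_le X (Xt m) α β g hg_nonneg hg_zero hn0 hA1 h2A hk'A hk'β (hcont m) hR hR0
    obtain ⟨m, hm⟩ := (htend.eventually (Filter.eventually_gt_atTop (3 * R))).exists
    exact absurd (hbd m) (not_le.mpr hm)
  have hinf : sInf S = k := le_antisymm (Nat.sInf_le hkS) (le_csInf ⟨k, hkS⟩ hlb)
  rw [hinf, hk]
end

section
/- Suppose α ∈ (0, 1/2], β ∈ [0, 1/2] and ⌈αn⌉ ≥ 3. If k < min(⌈αn⌉, ⌊βn⌋ + 2), then the trimmed covariance operator does not break down under k-contamination: sup{‖Ĉ(X̃)‖_op : X̃ a k-contaminated sample of X₁,…,Xₙ} < ∞, where ‖·‖_op is the operator norm. -/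
open scoped BigOperators RealInnerProductSpace

lemma aux_sampleRank_le {n : ℕ} (r : Fin n → ℝ) (i : Fin n) : sampleRank r i ≤ n := by
  classical
  have hd : Disjoint (Finset.univ.filter fun j => r j < r i)
      (Finset.univ.filter fun j => j ≤ i ∧ r j = r i) := by
    rw [Finset.disjoint_left]
    intro a ha hb
    simp only [Finset.mem_filter] at ha hb
    exact absurd hb.2.2 (ne_of_lt ha.2)
  calc sampleRank r i
      = ((Finset.univ.filter fun j => r j < r i) ∪
         (Finset.univ.filter fun j => j ≤ i ∧ r j = r i)).card :=
        (Finset.card_union_of_disjoint hd).symm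
    _ ≤ (Finset.univ : Finset (Fin n)).card := Finset.card_le_card (Finset.subset_univ _)
    _ = n := by simp

lemma aux_exists_rank_one {n : ℕ} (hn : 0 < n) (r : Fin n → ℝ) :
    ∃ i, sampleRank r i = 1 := by
  classical
  obtain ⟨i₁, -, hi₁⟩ := Finset.exists_min_image Finset.univ r ⟨⟨0, hn⟩, Finset.mem_univ _⟩
  set A := Finset.univ.filter fun i : Fin n => ∀ j, r i ≤ r j with hA
  have hAne : A.Nonempty := by
    refine ⟨i₁, ?_⟩
    simp only [hA, Finset.mem_filter, Finset.mem_univ, true_and]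
    exact fun j => hi₁ j (Finset.mem_univ j)
  refine ⟨A.min' hAne, ?_⟩
  have hmin : ∀ j, r (A.min' hAne) ≤ r j := by
    have := A.min'_mem hAne
    simpa [hA] using this
  rw [sampleRank]
  have h1 : (Finset.univ.filter fun j => r j < r (A.min' hAne)) = ∅ := by
    ext j; simp [not_lt.2 (hmin j)]
  have h2 : (Finset.univ.filter fun j => j ≤ A.min' hAne ∧ r j = r (A.min' hAne))
      = {A.min' hAne} := by
    ext j
    simp only [Finset.mem_filter, Finset.mem_univ, true_and, Finset.mem_singleton]
    constructor
    · rintro ⟨hle, heq⟩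
      have hjA : j ∈ A := by
        simp only [hA, Finset.mem_filter, Finset.mem_univ, true_and]
        intro j'; rw [heq]; exact hmin j'
      exact le_antisymm hle (A.min'_le j hjA)
    · rintro rfl; exact ⟨le_rfl, rfl⟩
  rw [h1, h2]; simp


set_option maxHeartbeats 1000000 in
/-- **Statement 4.** If `⌈αn⌉ ≥ 3` and `k < min(⌈αn⌉, ⌊βn⌋ + 2)`, then the trimmed covariance operator
does not break down under `k`-contamination: the norms the operator norms `‖Ĉ(X̃)‖_op` over all `k`-contaminated
samples `X̃` are uniformly bounded. -/
theorem trimmedCov_no_breakdown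
    {H : Type*} [NormedAddCommGroup H] [InnerProductSpace ℝ H] [CompleteSpace H]
    [SecondCountableTopology H]
    {n : ℕ} (X : Fin n → H) (α β : ℝ)
    (hα : 0 < α) (hα' : α ≤ 1 / 2) (hβ : 0 ≤ β) (hβ' : β ≤ 1 / 2)
    (g : ℝ → ℝ)
    (hg_nonneg : ∀ t ∈ Set.Icc (0 : ℝ) 1, 0 ≤ g t)
    (hg_bdd : BddAbove (g '' Set.Icc (0 : ℝ) 1))
    (hg_mono : AntitoneOn g (Set.Icc (0 : ℝ) 1))
    (hg_pos : ∀ t ∈ Set.Icc (0 : ℝ) 1, t < 1 - β → 0 < g t)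
    (hg_zero : ∀ t ∈ Set.Icc (0 : ℝ) 1, 1 - β ≤ t → g t = 0)
    (hn : 3 ≤ ⌈α * n⌉₊)
    (k : ℕ) (hk : k < min ⌈α * n⌉₊ (⌊β * n⌋₊ + 2)) :
    ∃ M : ℝ, ∀ Xt : Fin n → H, Contaminated k X Xt → ‖trimmedCov g α Xt‖ ≤ M := by
  classical
  -- basic numeric facts
  have hn0 : 0 < n := by
    rcases Nat.eq_zero_or_pos n with h | h
    · subst h; simp at hn
    · exact h
  have hnR : (0 : ℝ) < n := by exact_mod_cast hn0
  have hαn : α * n ≤ n / 2 := by nlinarith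
  have h2αn : (2 : ℝ) < α * n := by
    have h := Nat.lt_ceil.mp (lt_of_lt_of_le (by norm_num : 2 < 3) hn)
    exact_mod_cast h
  have hn5 : 5 ≤ n := by
    have h4 : (4 : ℝ) < n := by nlinarith
    
    have h4' : 4 < n := by exact_mod_cast h4
    omega
  have hmn : ⌈α * n⌉₊ ≤ n := Nat.ceil_le.mpr (by nlinarith)
  have h2m : 2 * ⌈α * n⌉₊ ≤ n + 1 := by
    have h1 : (⌈α * n⌉₊ : ℝ) < α * n + 1 := Nat.ceil_lt_add_one (by positivity)
    have h2 : ((2 * ⌈α * n⌉₊ : ℕ) : ℝ) < (((n + 2 : ℕ)) : ℝ) := by push_cast; nlinarith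
    have := Nat.cast_lt.mp h2
    omega
  have hkm : k < ⌈α * n⌉₊ := lt_of_lt_of_le hk (min_le_left _ _)
  have hkn : k < n := lt_of_lt_of_le hkm hmn
  have hmnk : ⌈α * n⌉₊ ≤ n - k := by omega
  have hkβ : (k : ℝ) ≤ β * n + 1 := by
    have h1 : k ≤ ⌊β * n⌋₊ + 1 := by
      have := lt_of_lt_of_le hk (min_le_right _ _); omega
    have h2 : (⌊β * n⌋₊ : ℝ) ≤ β * n := Nat.floor_le (by positivity)
    have h1' : (k : ℝ) ≤ (⌊β * n⌋₊ : ℝ) + 1 := by exact_mod_cast h1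
    linarith
  set R₀ := ∑ i, ‖X i‖ with hR₀
  have hXle : ∀ i, ‖X i‖ ≤ R₀ :=
    fun i => Finset.single_le_sum (fun j _ => norm_nonneg (X j)) (Finset.mem_univ i)
  have hR₀0 : 0 ≤ R₀ := Finset.sum_nonneg fun i _ => norm_nonneg _
  set R : ℝ := 3 * R₀ + 1 with hRdef
  have hR0 : 0 < R := by rw [hRdef]; linarith
  refine ⟨4 * R ^ 2, fun Xt hXt => ?_⟩
  set w := sampleWeight g α Xt with hw
  set r := sampleRadius α Xt with hr
  set S := Finset.univ.filter (fun i => Xt i = X i) with hS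
  have hScard : n - k ≤ S.card := hXt
  have hwnn : ∀ i, 0 ≤ w i := by
    intro i
    rw [hw]
    apply hg_nonneg
    constructor
    · positivity
    · rw [div_le_one hnR]
      exact_mod_cast aux_sampleRank_le _ i
  -- Step 2: uncontaminated points have small α-radius
  have hrad : ∀ i ∈ S, r i ≤ 2 * R₀ := by
    intro i hi
    rw [hr]
    show kthSmallest (fun j => ‖Xt i - Xt j‖) ⌈α * n⌉₊ ≤ 2 * R₀
    rw [kthSmallest]
    apply csInf_le
    · refine ⟨0, fun t ht => ?_⟩
      by_contra hlt
      push_neg at hlt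
      simp only [Set.mem_setOf_eq] at ht
      have hemp : (Finset.univ.filter fun j => ‖Xt i - Xt j‖ ≤ t) = ∅ := by
        ext j
        simp only [Finset.mem_filter, Finset.mem_univ, true_and, Finset.notMem_empty,
          iff_false]
        intro hj
        exact absurd (le_trans (norm_nonneg _) hj) (not_le.mpr hlt)
      rw [hemp, Finset.card_empty] at ht
      omega
    · simp only [Set.mem_setOf_eq]
      have hsub : S ⊆ Finset.univ.filter fun j => ‖Xt i - Xt j‖ ≤ 2 * R₀ := by
        intro j hj
        have hji := Finset.mem_filter.mp hj
        have hii := Finset.mem_filter.mp hi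
        simp only [Finset.mem_filter, Finset.mem_univ, true_and]
        rw [hji.2, hii.2]
        calc ‖X i - X j‖ ≤ ‖X i‖ + ‖X j‖ := norm_sub_le _ _
          _ ≤ R₀ + R₀ := add_le_add (hXle i) (hXle j)
          _ = 2 * R₀ := by ring
      exact le_trans hmnk (le_trans hScard (Finset.card_le_card hsub))
  -- Step 3: nonzero weight forces small α-radius
  have hrad' : ∀ i, w i ≠ 0 → r i ≤ 2 * R₀ := by
    intro i hwi
    by_contra hgt
    push_neg at hgt
    apply hwi
    rw [hw]
    show g ((sampleRank (sampleRadius α Xt) i : ℝ) / n) = 0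
    rw [← hr]
    have hA : n - k ≤ (Finset.univ.filter fun j => r j < r i).card := by
      refine le_trans hScard (Finset.card_le_card ?_)
      intro j hj
      simp only [Finset.mem_filter, Finset.mem_univ, true_and]
      exact lt_of_le_of_lt (hrad j hj) hgt
    have hB : 1 ≤ (Finset.univ.filter fun j => j ≤ i ∧ r j = r i).card := by
      rw [Nat.one_le_iff_ne_zero, ← Nat.pos_iff_ne_zero, Finset.card_pos]
      exact ⟨i, by simp⟩
    have hrk : n - k + 1 ≤ sampleRank r i := by
      rw [sampleRank]; omega
    apply hg_zero
    · constructor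
      · positivity
      · rw [div_le_one hnR]
        exact_mod_cast aux_sampleRank_le r i
    · rw [le_div_iff₀ hnR]
      have hc : ((n - k + 1 : ℕ) : ℝ) ≤ (sampleRank r i : ℝ) := by exact_mod_cast hrk
      have hc2 : ((n - k + 1 : ℕ) : ℝ) = (n : ℝ) - k + 1 := by
        push_cast [Nat.cast_sub hkn.le]; ring
      nlinarith [hc, hc2]
  -- Step 4: nonzero weight forces bounded norm
  have hfar : ∀ i, w i ≠ 0 → ‖Xt i‖ ≤ R := by
    intro i hwi
    have h1 : r i ≤ 2 * R₀ := hrad' i hwi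
    have hreq : r i = sInf {t : ℝ |
        ⌈α * n⌉₊ ≤ (Finset.univ.filter fun j => ‖Xt i - Xt j‖ ≤ t).card} := by
      rw [hr]; rfl
    have hne : Set.Nonempty {t : ℝ |
        ⌈α * n⌉₊ ≤ (Finset.univ.filter fun j => ‖Xt i - Xt j‖ ≤ t).card} := by
      refine ⟨∑ j, ‖Xt i - Xt j‖, ?_⟩
      simp only [Set.mem_setOf_eq]
      have huniv : (Finset.univ.filter fun j => ‖Xt i - Xt j‖ ≤ ∑ j, ‖Xt i - Xt j‖)
          = Finset.univ := by
        apply Finset.filter_true_of_mem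
        intro j _
        exact Finset.single_le_sum (f := fun j' => ‖Xt i - Xt j'‖) (fun j' _ => norm_nonneg _) (Finset.mem_univ j)
      rw [huniv]
      simpa using hmn
    have h3 : sInf {t : ℝ |
        ⌈α * n⌉₊ ≤ (Finset.univ.filter fun j => ‖Xt i - Xt j‖ ≤ t).card} < 2 * R₀ + 1 := by
      rw [← hreq]; linarith
    obtain ⟨t, ht, htlt⟩ := exists_lt_of_csInf_lt hne h3
    simp only [Set.mem_setOf_eq] at ht
    set F := Finset.univ.filter fun j => ‖Xt i - Xt j‖ ≤ t with hF
    have hint : (F ∩ S).Nonempty := by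
      rw [← Finset.card_pos]
      have hun : (F ∪ S).card ≤ n := by
        calc (F ∪ S).card ≤ (Finset.univ : Finset (Fin n)).card :=
          Finset.card_le_card (Finset.subset_univ _)
        _ = n := by simp
      have hci := Finset.card_union_add_card_inter F S
      omega
    obtain ⟨j, hj⟩ := hint
    rw [Finset.mem_inter] at hj
    have hdij : ‖Xt i - Xt j‖ ≤ t := (Finset.mem_filter.mp hj.1).2
    have hXj : Xt j = X j := (Finset.mem_filter.mp hj.2).2
    calc ‖Xt i‖ = ‖(Xt i - Xt j) + Xt j‖ := by rw [sub_add_cancel]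
      _ ≤ ‖Xt i - Xt j‖ + ‖Xt j‖ := norm_add_le _ _
      _ ≤ (2 * R₀ + 1) + R₀ := by
          refine add_le_add (le_of_lt (lt_of_le_of_lt hdij htlt)) ?_
          rw [hXj]; exact hXle j
      _ = R := by rw [hRdef]; ring
  -- Step 5: total weight is positive
  set W := ∑ i, w i with hW
  obtain ⟨i₀, hi₀⟩ := aux_exists_rank_one hn0 r
  have hw₀ : 0 < w i₀ := by
    rw [hw]
    show 0 < g ((sampleRank (sampleRadius α Xt) i₀ : ℝ) / n)
    rw [← hr, hi₀]
    apply hg_pos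
    · constructor
      · positivity
      · rw [div_le_one hnR]
        exact_mod_cast hn0
    · have h5 : (5 : ℝ) ≤ n := by exact_mod_cast hn5
      have : (1 : ℝ) / n ≤ 1 / 5 := by
        apply div_le_div_of_nonneg_left (by norm_num) (by norm_num) h5
      push_cast
      linarith
  have hW0 : 0 < W :=
    lt_of_lt_of_le hw₀ (Finset.single_le_sum (fun j _ => hwnn j) (Finset.mem_univ i₀))
  -- Step 6: trimmed mean is bounded
  set μ := trimmedMean g α Xt with hμdef
  have hμ : ‖μ‖ ≤ R := by
    rw [hμdef, trimmedMean]
    have he : (∑ i, sampleWeight g α Xt i) = W := by rw [hW, hw]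
    rw [norm_smul, he]
    have hsum : ‖∑ i, sampleWeight g α Xt i • Xt i‖ ≤ W * R := by
      refine le_trans (norm_sum_le _ _) ?_
      rw [hW, Finset.sum_mul]
      apply Finset.sum_le_sum
      intro i _
      have hwe : sampleWeight g α Xt i = w i := by rw [hw]
      rw [hwe, norm_smul, Real.norm_eq_abs, abs_of_nonneg (hwnn i)]
      by_cases hwi : w i = 0
      · simp [hwi]
      · exact mul_le_mul_of_nonneg_left (hfar i hwi) (hwnn i)
    rw [Real.norm_eq_abs, abs_of_nonneg (inv_nonneg.mpr hW0.le)]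
    calc W⁻¹ * ‖∑ i, sampleWeight g α Xt i • Xt i‖ ≤ W⁻¹ * (W * R) :=
        mul_le_mul_of_nonneg_left hsum (inv_nonneg.mpr hW0.le)
      _ = R := by field_simp
  -- Step 7: bound the covariance operator
  rw [trimmedCov]
  have he : (∑ i, sampleWeight g α Xt i) = W := by rw [hW, hw]
  refine ContinuousLinearMap.opNorm_le_bound _ (by positivity) (fun h => ?_)
  rw [ContinuousLinearMap.smul_apply, ContinuousLinearMap.sum_apply, norm_smul, he,
    Real.norm_eq_abs, abs_of_nonneg (inv_nonneg.mpr hW0.le)]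
  have hsum : ‖∑ i, (sampleWeight g α Xt i •
      ((innerSL ℝ (Xt i - trimmedMean g α Xt)).smulRight (Xt i - trimmedMean g α Xt))) h‖
      ≤ W * (4 * R ^ 2 * ‖h‖) := by
    refine le_trans (norm_sum_le _ _) ?_
    rw [hW, Finset.sum_mul]
    refine Finset.sum_le_sum fun i _ => ?_
    have hwe : sampleWeight g α Xt i = w i := by rw [hw]
    rw [ContinuousLinearMap.smul_apply, ContinuousLinearMap.smulRight_apply, hwe,
      norm_smul, norm_smul, Real.norm_eq_abs, abs_of_nonneg (hwnn i), Real.norm_eq_abs]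
    by_cases hwi : w i = 0
    · simp only [hwi, zero_mul]; exact le_refl 0
    · refine mul_le_mul_of_nonneg_left ?_ (hwnn i)
      have hv : ‖Xt i - trimmedMean g α Xt‖ ≤ 2 * R := by
        rw [← hμdef]
        calc ‖Xt i - μ‖ ≤ ‖Xt i‖ + ‖μ‖ := norm_sub_le _ _
          _ ≤ R + R := add_le_add (hfar i hwi) hμ
          _ = 2 * R := by ring
      have hcs : |(innerSL ℝ (Xt i - trimmedMean g α Xt)) h| ≤
          ‖Xt i - trimmedMean g α Xt‖ * ‖h‖ := by
        rw [innerSL_apply_apply]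
        exact abs_real_inner_le_norm _ _
      calc |(innerSL ℝ (Xt i - trimmedMean g α Xt)) h| * ‖Xt i - trimmedMean g α Xt‖
          ≤ (‖Xt i - trimmedMean g α Xt‖ * ‖h‖) * ‖Xt i - trimmedMean g α Xt‖ :=
            mul_le_mul_of_nonneg_right hcs (norm_nonneg _)
        _ = ‖Xt i - trimmedMean g α Xt‖ * ‖Xt i - trimmedMean g α Xt‖ * ‖h‖ := by ring
        _ ≤ (2 * R) * (2 * R) * ‖h‖ := by
            refine mul_le_mul_of_nonneg_right ?_ (norm_nonneg _)
            exact mul_le_mul hv hv (norm_nonneg _) (by positivity)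
        _ = 4 * R ^ 2 * ‖h‖ := by ring
  calc W⁻¹ * ‖∑ i, (sampleWeight g α Xt i •
      ((innerSL ℝ (Xt i - trimmedMean g α Xt)).smulRight (Xt i - trimmedMean g α Xt))) h‖
      ≤ W⁻¹ * (W * (4 * R ^ 2 * ‖h‖)) := mul_le_mul_of_nonneg_left hsum (inv_nonneg.mpr hW0.le)
    _ = 4 * R ^ 2 * ‖h‖ := by field_simp
end

section
/- Let P̃ be the pushforward of P under the map x ↦ aUx + b, where U is a unitary operator on H, a ≠ 0 is a real scalar, and b ∈ H. Then the population trimmed mean satisfies μ(P̃) = aU(μ(P)) + b. -/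
open MeasureTheory
open scoped RealInnerProductSpace

/-- `F_P(t; v) = P(‖X − v‖ ≤ t)`. -/
noncomputable def Fpop {H : Type*} [NormedAddCommGroup H] [MeasurableSpace H]
    (P : Measure H) (t : ℝ) (v : H) : ℝ :=
  (P {x | ‖x - v‖ ≤ t}).toReal

/-- The α-radius `r_P(v) = inf {t ≥ 0 : F_P(t; v) ≥ α}`. -/
noncomputable def rpop {H : Type*} [NormedAddCommGroup H] [MeasurableSpace H]
    (α : ℝ) (P : Measure H) (v : H) : ℝ :=
  sInf {t : ℝ | 0 ≤ t ∧ α ≤ Fpop P t v}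

/-- `G_P(t) = P(r_P(X) ≤ t)`. -/
noncomputable def Gpop {H : Type*} [NormedAddCommGroup H] [MeasurableSpace H]
    (α : ℝ) (P : Measure H) (t : ℝ) : ℝ :=
  (P {x | rpop α P x ≤ t}).toReal

/-- The population weight function `w_P(v) = g(G_P(r_P(v)))`. -/
noncomputable def wpop {H : Type*} [NormedAddCommGroup H] [MeasurableSpace H]
    (g : ℝ → ℝ) (α : ℝ) (P : Measure H) (v : H) : ℝ :=
  g (Gpop α P (rpop α P v))

/-- The population trimmed mean `μ(P) = E_P[w_P(X)X] / E_P[w_P(X)]`. -/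
noncomputable def meanPop {H : Type*} [NormedAddCommGroup H] [InnerProductSpace ℝ H]
    [CompleteSpace H] [MeasurableSpace H] (g : ℝ → ℝ) (α : ℝ) (P : Measure H) : H :=
  (∫ x, wpop g α P x ∂P)⁻¹ • ∫ x, wpop g α P x • x ∂P

/-- The population trimmed covariance operator
`C(P)(h) = E_P[w_P(X)⟨X − μ(P), h⟩(X − μ(P))] / E_P[w_P(X)]`. -/
noncomputable def covPop {H : Type*} [NormedAddCommGroup H] [InnerProductSpace ℝ H]
    [CompleteSpace H] [MeasurableSpace H] (g : ℝ → ℝ) (α : ℝ) (P : Measure H) (h : H) : H :=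
  (∫ x, wpop g α P x ∂P)⁻¹ •
    ∫ x, (wpop g α P x * ⟪x - meanPop g α P, h⟫) • (x - meanPop g α P) ∂P

/-!
The map `T x = a • U x + b` multiplies all distances by `|a|`. Hence it multiplies every α-radius
by `|a|` and rescales `G` accordingly, so the weights are invariant: `w_{P̃}(T x) = w_P(x)`.
By change of variables, `∫ w_{P̃} dP̃ = ∫ w_P dP` and `∫ w_{P̃}(y) y dP̃ = ∫ w_P(x) (a U x + b) dP`,
and the latter splits by linearity. Splitting is legitimate because `∫ w_P > 0` forces `w_P` to be
integrable, while `w_P` vanishes outside a bounded set: `r_P(x) ≥ ‖x‖ - R` for some `R`, and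
`G_P(r) ≥ 1 - β` for large `r`.
-/

open scoped Pointwise

section Similarity

variable {H H' : Type*} [NormedAddCommGroup H] [MeasurableSpace H]
  [NormedAddCommGroup H'] [MeasurableSpace H']
  {P : Measure H} {T : H ≃ᵐ H'} {c : ℝ}

theorem Fpop_map (hc : 0 < c) (hT : ∀ x y, ‖T x - T y‖ = c * ‖x - y‖) (t : ℝ) (v : H) :
    Fpop (P.map T) t (T v) = Fpop P (t / c) v := by
  rw [Fpop, Fpop, T.map_apply]
  congr 2
  ext y
  simp only [Set.mem_preimage, Set.mem_ofPred_eq, hT, le_div_iff₀ hc, mul_comm c]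

theorem rpop_map (hc : 0 < c) (hT : ∀ x y, ‖T x - T y‖ = c * ‖x - y‖) (α : ℝ) (v : H) :
    rpop α (P.map T) (T v) = c * rpop α P v := by
  have hset : {t : ℝ | 0 ≤ t ∧ α ≤ Fpop (P.map T) t (T v)}
      = c • {t : ℝ | 0 ≤ t ∧ α ≤ Fpop P t v} := by
    ext t
    simp only [Set.mem_smul_set, Set.mem_ofPred_eq, Fpop_map hc hT, smul_eq_mul]
    constructor
    · rintro ⟨ht, htF⟩
      exact ⟨t / c, ⟨div_nonneg ht hc.le, htF⟩, mul_div_cancel₀ t hc.ne'⟩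
    · rintro ⟨s, ⟨hs, hsF⟩, rfl⟩
      exact ⟨by positivity, by rwa [mul_div_cancel_left₀ s hc.ne']⟩
  rw [rpop, hset, Real.sInf_smul_of_nonneg hc.le, smul_eq_mul, rpop]

theorem Gpop_map (hc : 0 < c) (hT : ∀ x y, ‖T x - T y‖ = c * ‖x - y‖) (α t : ℝ) :
    Gpop α (P.map T) t = Gpop α P (t / c) := by
  rw [Gpop, Gpop, T.map_apply]
  congr 2
  ext y
  simp only [Set.mem_preimage, Set.mem_ofPred_eq, rpop_map hc hT, le_div_iff₀ hc, mul_comm c]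

theorem wpop_map (hc : 0 < c) (hT : ∀ x y, ‖T x - T y‖ = c * ‖x - y‖) (g : ℝ → ℝ) (α : ℝ)
    (v : H) : wpop g α (P.map T) (T v) = wpop g α P v := by
  rw [wpop, wpop, rpop_map hc hT, Gpop_map hc hT, mul_div_cancel_left₀ _ hc.ne']

theorem meanPop_map [InnerProductSpace ℝ H] [CompleteSpace H] [InnerProductSpace ℝ H']
    [CompleteSpace H'] (hc : 0 < c) (hT : ∀ x y, ‖T x - T y‖ = c * ‖x - y‖)
    (g : ℝ → ℝ) (α : ℝ) :
    meanPop g α (P.map T) = (∫ x, wpop g α P x ∂P)⁻¹ • ∫ x, wpop g α P x • T x ∂P := by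
  simp only [meanPop, integral_map_equiv, wpop_map hc hT]

end Similarity

theorem integral_smul_map_add {Ω E F : Type*} [MeasurableSpace Ω] [NormedAddCommGroup E]
    [NormedSpace ℝ E] [CompleteSpace E] [NormedAddCommGroup F] [NormedSpace ℝ F] [CompleteSpace F]
    (P : Measure Ω) (L : E →L[ℝ] F) (b : F) {w : Ω → ℝ} {X : Ω → E} (hw : Integrable w P)
    (hwX : Integrable (fun x => w x • X x) P) :
    ∫ x, w x • (L (X x) + b) ∂P = L (∫ x, w x • X x ∂P) + (∫ x, w x ∂P) • b := by
  have hsplit : ∀ x, w x • (L (X x) + b) = L (w x • X x) + w x • b := fun x => by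
    rw [map_smul, smul_add]
  simp_rw [hsplit]
  rw [integral_add (L.integrable_comp hwX) (hw.smul_const b), L.integral_comp_comm hwX,
    integral_smul_const]

section AffineSimilarity

variable {H : Type*} [NormedAddCommGroup H] [InnerProductSpace ℝ H] [MeasurableSpace H]
  [BorelSpace H]

noncomputable def affineSimilarity (U : H ≃ₗᵢ[ℝ] H) {a : ℝ} (ha : a ≠ 0) (b : H) : H ≃ᵐ H :=
  ((U.toHomeomorph.trans (Homeomorph.smulOfNeZero a ha)).trans
    (Homeomorph.addRight b)).toMeasurableEquiv

@[simp]
theorem coe_affineSimilarity (U : H ≃ₗᵢ[ℝ] H) {a : ℝ} (ha : a ≠ 0) (b : H) :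
    ⇑(affineSimilarity U ha b) = fun x => a • U x + b :=
  rfl

theorem norm_affineSimilarity_sub (U : H ≃ₗᵢ[ℝ] H) {a : ℝ} (ha : a ≠ 0) (b x y : H) :
    ‖affineSimilarity U ha b x - affineSimilarity U ha b y‖ = |a| * ‖x - y‖ := by
  rw [coe_affineSimilarity, add_sub_add_right_eq_sub, ← smul_sub, norm_smul, ← map_sub,
    U.norm_map, Real.norm_eq_abs]

theorem meanPop_map_affineSimilarity [CompleteSpace H] (P : Measure H) (g : ℝ → ℝ) (α : ℝ)
    (U : H ≃ₗᵢ[ℝ] H) {a : ℝ} (ha : a ≠ 0) (b : H) (hw : Integrable (wpop g α P) P)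
    (hwx : Integrable (fun x => wpop g α P x • x) P) (hE : ∫ x, wpop g α P x ∂P ≠ 0) :
    meanPop g α (P.map (affineSimilarity U ha b)) = a • U (meanPop g α P) + b := by
  set c := ∫ x, wpop g α P x ∂P
  calc meanPop g α (P.map (affineSimilarity U ha b))
      = c⁻¹ • ∫ x, wpop g α P x • (a • U x + b) ∂P :=
        meanPop_map (abs_pos.mpr ha) (norm_affineSimilarity_sub U ha b) g α
    _ = c⁻¹ • (a • U (∫ x, wpop g α P x • x ∂P) + c • b) := by
        congr 1
        exact integral_smul_map_add P (a • (U : H →L[ℝ] H)) b hw hwx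
    _ = a • U (meanPop g α P) + b := by
        rw [meanPop, map_smul, smul_add, smul_smul c⁻¹ c, inv_mul_cancel₀ hE, one_smul, smul_comm]

end AffineSimilarity

theorem exists_lt_measure_setOf_le {Ω : Type*} [MeasurableSpace Ω] (P : Measure Ω)
    [IsProbabilityMeasure P] (f : Ω → ℝ) {c : ℝ} (hc : c < 1) :
    ∃ m : ℝ, c < (P {x | f x ≤ m}).toReal := by
  have hmono : Monotone fun m : ℝ => {x | f x ≤ m} := fun m n hmn x hx => le_trans hx hmn
  have hunion : ⋃ m : ℝ, {x | f x ≤ m} = Set.univ :=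
    Set.eq_univ_of_forall fun x => Set.mem_iUnion.mpr ⟨f x, Set.mem_ofPred.mpr le_rfl⟩
  have hlim := tendsto_measure_iUnion_atTop (μ := P) hmono
  rw [hunion, measure_univ] at hlim
  have hlim' := (ENNReal.tendsto_toReal ENNReal.one_ne_top).comp hlim
  exact ((hlim'.eventually (lt_mem_nhds (by simpa using hc))).exists)

section Tails

variable {H : Type*} [NormedAddCommGroup H] [MeasurableSpace H]
  (P : Measure H) [IsProbabilityMeasure P]

theorem Gpop_mem_Icc (α t : ℝ) : Gpop α P t ∈ Set.Icc (0 : ℝ) 1 :=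
  ⟨ENNReal.toReal_nonneg, ENNReal.toReal_le_of_le_ofReal zero_le_one (by simpa using prob_le_one)⟩

theorem exists_lt_of_Gpop_lt (α : ℝ) {c : ℝ} (hc : c < 1) :
    ∃ m : ℝ, ∀ t, Gpop α P t < c → t < m := by
  obtain ⟨m, hm⟩ := exists_lt_measure_setOf_le P (rpop α P) hc
  refine ⟨m, fun t ht => lt_of_not_ge fun hmt => ?_⟩
  have hGmono : Gpop α P m ≤ Gpop α P t :=
    ENNReal.toReal_mono (measure_ne_top _ _) (measure_mono fun x hx => le_trans hx hmt)
  exact (hm.trans_le hGmono).not_gt ht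

theorem exists_sub_le_rpop [OpensMeasurableSpace H] {α : ℝ} (hα : 0 < α) (hα1 : α < 1) : ∃ R : ℝ, ∀ x, ‖x‖ - R ≤ rpop α P x := by
  obtain ⟨R, hR⟩ := exists_lt_measure_setOf_le P (fun x => ‖x‖) (show 1 - α < 1 by linarith)
  refine ⟨R, fun x => le_csInf ?_ ?_⟩
  · obtain ⟨m, hm⟩ := exists_lt_measure_setOf_le P (fun y => ‖y - x‖) hα1
    exact ⟨max m 0, le_max_right _ _, hm.le.trans (ENNReal.toReal_mono (measure_ne_top _ _)
      (measure_mono fun _ hy => Set.mem_ofPred.mpr (le_trans hy (le_max_left _ _))))⟩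
  rintro t ⟨-, htα⟩
  by_contra! ht
  have hsub : {y : H | ‖y - x‖ ≤ t} ⊆ {y : H | ‖y‖ ≤ R}ᶜ := fun y hy hyR => by
    have := norm_le_norm_add_norm_sub' x y
    rw [norm_sub_rev] at this
    simp only [Set.mem_ofPred_eq] at hy hyR
    linarith
  have hmeas : MeasurableSet {y : H | ‖y‖ ≤ R} :=
    (isClosed_le continuous_norm continuous_const).measurableSet
  have hF : Fpop P t x ≤ 1 - (P {y : H | ‖y‖ ≤ R}).toReal := by
    rw [← measureReal_def, ← probReal_compl_eq_one_sub hmeas]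
    exact ENNReal.toReal_mono (measure_ne_top _ _) (measure_mono hsub)
  linarith

theorem exists_norm_le_of_wpop_ne_zero [OpensMeasurableSpace H] {α β : ℝ} (hα : 0 < α) (hα1 : α < 1) (hβ : 0 < β) {g : ℝ → ℝ}
    (hg_zero : ∀ t ∈ Set.Icc (0 : ℝ) 1, 1 - β ≤ t → g t = 0) :
    ∃ R : ℝ, ∀ x, wpop g α P x ≠ 0 → ‖x‖ ≤ R := by
  obtain ⟨R, hR⟩ := exists_sub_le_rpop P hα hα1
  obtain ⟨m, hm⟩ := exists_lt_of_Gpop_lt P α (show 1 - β < 1 by linarith)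
  refine ⟨m + R, fun x hx => ?_⟩
  have hG : Gpop α P (rpop α P x) < 1 - β :=
    lt_of_not_ge fun h => hx (hg_zero _ (Gpop_mem_Icc P α _) h)
  linarith [hm _ hG, hR x]

end Tails

theorem integrable_smul_self_of_norm_le {H : Type*} [NormedAddCommGroup H] [NormedSpace ℝ H]
    [MeasurableSpace H] [OpensMeasurableSpace H] [SecondCountableTopology H] {P : Measure H}
    {f : H → ℝ} (hf : Integrable f P) {R : ℝ} (hR : ∀ x, f x ≠ 0 → ‖x‖ ≤ R) :
    Integrable (fun x => f x • x) P := by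
  refine (hf.norm.const_mul R).mono' (hf.aestronglyMeasurable.smul aestronglyMeasurable_id)
    (Filter.Eventually.of_forall fun x => ?_)
  rw [norm_smul, mul_comm]
  rcases eq_or_ne (f x) 0 with h | h
  · simp [h]
  · exact mul_le_mul_of_nonneg_right (hR x h) (norm_nonneg _)

theorem meanPop_equivariance_general
    {H : Type*} [NormedAddCommGroup H] [InnerProductSpace ℝ H] [CompleteSpace H]
    [SecondCountableTopology H] [MeasurableSpace H] [BorelSpace H]
    (P : Measure H) [IsProbabilityMeasure P]
    (α β : ℝ) (hα : 0 < α) (hα' : α ≤ 1 / 2) (hβ : 0 < β)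
    (g : ℝ → ℝ)
    (hg_zero : ∀ t ∈ Set.Icc (0 : ℝ) 1, 1 - β ≤ t → g t = 0)
    (hE : 0 < ∫ x, wpop g α P x ∂P)
    (U : H ≃ₗᵢ[ℝ] H) (a : ℝ) (ha : a ≠ 0) (b : H)
    (Pt : Measure H) (hPt : Pt = Measure.map (fun x => a • U x + b) P) :
    meanPop g α Pt = a • U (meanPop g α P) + b := by
  have hw : Integrable (wpop g α P) P := Integrable.of_integral_ne_zero hE.ne'
  obtain ⟨R, hR⟩ := exists_norm_le_of_wpop_ne_zero P hα (by linarith) hβ hg_zero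
  rw [hPt, ← coe_affineSimilarity U ha b]
  exact meanPop_map_affineSimilarity P g α U ha b hw (integrable_smul_self_of_norm_le hw hR)
    hE.ne'

/-- If `P̃` is the pushforward of `P` under `x ↦ a • U x + b` with `U`
unitary, `a ≠ 0`, `b ∈ H`, then the population trimmed mean satisfies
`μ(P̃) = a • U(μ(P)) + b`. -/
theorem meanPop_equivariance
    {H : Type*} [NormedAddCommGroup H] [InnerProductSpace ℝ H] [CompleteSpace H]
    [SecondCountableTopology H] [MeasurableSpace H] [BorelSpace H]
    (P : Measure H) [IsProbabilityMeasure P]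
    (α β : ℝ) (hα : 0 < α) (hα' : α ≤ 1 / 2) (hβ : 0 < β) (hβ' : β ≤ 1 / 2)
    (g : ℝ → ℝ)
    (hg_nonneg : ∀ t ∈ Set.Icc (0 : ℝ) 1, 0 ≤ g t)
    (hg_bdd : BddAbove (g '' Set.Icc (0 : ℝ) 1))
    (hg_mono : AntitoneOn g (Set.Icc (0 : ℝ) 1))
    (hg_pos : ∀ t ∈ Set.Icc (0 : ℝ) 1, t < 1 - β → 0 < g t)
    (hg_zero : ∀ t ∈ Set.Icc (0 : ℝ) 1, 1 - β ≤ t → g t = 0)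
    (hE : 0 < ∫ x, wpop g α P x ∂P)
    (U : H ≃ₗᵢ[ℝ] H) (a : ℝ) (ha : a ≠ 0) (b : H)
    (Pt : Measure H) (hPt : Pt = Measure.map (fun x => a • U x + b) P) :
    meanPop g α Pt = a • U (meanPop g α P) + b :=
  meanPop_equivariance_general P α β hα hα' hβ g hg_zero hE U a ha b Pt hPt
end
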